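/- For arbitrary complex numbers c₁,…,c_N, the following multilinear expansion of a determinant holds: ∑_{h∈{0,1}^N} ( ∏_{n=1}^N c_n^{1−h_n} ) · V(ξ₁ − (1−h₁)η, …, ξ_N − (1−h_N)η) = 2^{−N(N−1)/2} · det_{1≤i,j≤N} [ e^{(2j−N−1)ξ_i} + c_i · e^{(2j−N−1)(ξ_i−η)} ], where the sum runs over all 2^N binary tuples h and c^0 = 1 by convention. -/

import Mathlib

/-!
Each row of the matrix is the sum of the two rows `e^{(2j-N-1)ξ_i}` and
`c_i e^{(2j-N-1)(ξ_i-η)}`, so multilinearity of the determinant in its rows expands it into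
`2^N` determinants. In each of them the factors `c_i` come out of their rows, and what remains
is `det[e^{(2j-N-1)x_i}] = ∏ e^{(1-N)x_i} · ∏_{i<j} (e^{2x_j} - e^{2x_i})`, a Vandermonde
determinant in `e^{2x_i}`. Since `sinh(x_j - x_i) = ½ e^{-x_i} e^{-x_j} (e^{2x_j} - e^{2x_i})` and every index
lies in exactly `N - 1` pairs, this equals `2^{N(N-1)/2} V(x)`.
-/

open Complex Finset

noncomputable section

/-- generalized Vandermonde product `V(x₁,…,x_m) = ∏_{i<j} sinh(x_j − x_i)` -/
def Vand {m : ℕ} (x : Fin m → ℂ) : ℂ :=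
  ∏ i : Fin m, ∏ j ∈ Finset.Ioi i, Complex.sinh (x j - x i)

theorem Finset.prod_prod_Ioi_mul_eq_prod_pow {α M : Type*} [CommMonoid M] [LinearOrder α]
    [Fintype α] [LocallyFiniteOrderTop α] [LocallyFiniteOrderBot α] (f : α → M) :
    ∏ i, ∏ j ∈ Ioi i, f i * f j = ∏ i, f i ^ (Fintype.card α - 1) := by
  rw [prod_prod_Ioi_mul_eq_prod_prod_off_diag (fun _ i => f i)]
  simp [prod_const, card_compl]

theorem Fin.sum_card_Ioi (N : ℕ) : ∑ i : Fin N, #(Ioi i) = N * (N - 1) / 2 := by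
  simp only [Fin.card_Ioi]
  rw [Fin.sum_univ_eq_sum_range (fun i => N - 1 - i) N, sum_range_reflect (fun i => i) N,
    sum_range_id]

theorem Matrix.det_of_sum {R n κ : Type*} [CommRing R] [Fintype n] [DecidableEq n] [Fintype κ]
    (A : n → κ → n → R) :
    (Matrix.of fun i j => ∑ k, A i k j).det =
      ∑ h : n → κ, (Matrix.of fun i j => A i (h i) j).det := by
  simp only [← Finset.sum_apply]
  exact (detRowAlternating (R := R) (n := n)).map_sum A

theorem Complex.sinh_sub_eq (a b : ℂ) :
    sinh (b - a) = 2⁻¹ * (exp (-a) * exp (-b)) * (exp (2 * b) - exp (2 * a)) := by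
  rw [sinh, mul_assoc, mul_sub, ← exp_add, ← exp_add, ← exp_add]
  ring_nf

theorem Vand_eq_inv_two_pow_mul_det {N : ℕ} (x : Fin N → ℂ) :
    Vand x = ((2 : ℂ) ^ (N * (N - 1) / 2))⁻¹ *
      (Matrix.of fun i j : Fin N => exp ((2 * ((j : ℕ) : ℂ) + 1 - N) * x i)).det := by
  have hdet : (Matrix.of fun i j : Fin N => exp ((2 * ((j : ℕ) : ℂ) + 1 - N) * x i)).det =
      (∏ i, exp ((1 - N) * x i)) * ∏ i, ∏ j ∈ Ioi i, (exp (2 * x j) - exp (2 * x i)) := by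
    rw [← Matrix.det_vandermonde, ← Matrix.det_mul_column]
    congr with i j
    rw [Matrix.vandermonde_apply, ← exp_nat_mul, ← exp_add]
    ring_nf
  have htwo :
      ∏ i : Fin N, ∏ _j ∈ Ioi i, (2⁻¹ : ℂ) = ((2 : ℂ) ^ (N * (N - 1) / 2))⁻¹ := by
    simp only [prod_const]
    rw [prod_pow_eq_pow_sum, Fin.sum_card_Ioi, inv_pow]
  have hexp :
      ∏ i : Fin N, ∏ j ∈ Ioi i, exp (-x i) * exp (-x j) = ∏ i, exp ((1 - N) * x i) := by
    rw [prod_prod_Ioi_mul_eq_prod_pow, Fintype.card_fin]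
    refine prod_congr rfl fun i _ => ?_
    rw [← exp_nat_mul, Nat.cast_sub i.pos]
    ring_nf
  rw [Vand, hdet, ← htwo, ← hexp]
  simp only [sinh_sub_eq, ← prod_mul_distrib, mul_assoc]

theorem multilinear_det_expansion (N : ℕ) (η : ℂ) (ξ : Fin N → ℂ)
    (c : Fin N → ℂ) :
    (∑ h : Fin N → Fin 2,
        (∏ n, c n ^ (1 - (h n : ℕ))) *
          Vand (fun n => ξ n - ((1 - (h n : ℕ) : ℕ) : ℂ) * η)) =
      ((2 : ℂ) ^ (N * (N - 1) / 2))⁻¹ *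
        Matrix.det (Matrix.of (fun i j : Fin N =>
          Complex.exp ((2 * ((j : ℕ) : ℂ) + 1 - (N : ℂ)) * ξ i) +
            c i * Complex.exp ((2 * ((j : ℕ) : ℂ) + 1 - (N : ℂ)) * (ξ i - η)))) := by
  have hrows : (Matrix.of fun i j : Fin N => exp ((2 * ((j : ℕ) : ℂ) + 1 - N) * ξ i) +
        c i * exp ((2 * ((j : ℕ) : ℂ) + 1 - N) * (ξ i - η))) =
      Matrix.of fun i (j : Fin N) => ∑ k : Fin 2, c i ^ (1 - (k : ℕ)) *
        exp ((2 * ((j : ℕ) : ℂ) + 1 - N) * (ξ i - ((1 - (k : ℕ) : ℕ) : ℂ) * η)) := by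
    ext i j
    simp [Fin.sum_univ_two, add_comm]
  rw [hrows, Matrix.det_of_sum, mul_sum]
  refine sum_congr rfl fun h _ => ?_
  rw [Vand_eq_inv_two_pow_mul_det, mul_left_comm, ← Matrix.det_mul_column]
  rfl

end
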